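/- arXiv:2403.10485 — 5 statements merged into one kernel-verified Lean document; each statement's English description precedes it below -/
import Mathlib

section
/- Let n and m₀ be integers with 0 < m₀ < n, and let h be an integer with 0 ≤ h ≤ m₀ − 1. Then, in the polynomial ring ℤ[x₁,…,xₙ], (h+1)·e_{n−m₀−1}(x₁,…,xₙ) = Σ_{a=m₀−h}^{n−1} Σ_{j=1}^{n−a} e_{h−m₀+a}(x_{j+1},…,x_{j+a−1}) · e_{n−h−1−a}(x_{j+a+1},…,xₙ,x₁,…,x_{j−1}), where the first factor is the elementary symmetric polynomial of degree h−m₀+a in the a−1 variables x_{j+1},…,x_{j+a−1}, and the second factor is the elementary symmetric polynomial of degree n−h−1−a in the n−a−1 variables x_{j+a+1},…,xₙ,x₁,…,x_{j−1}. -/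
/-- The elementary symmetric polynomial of degree `d` in the (finite) list of
variables `l`, with the convention that it is `1` for `d = 0` and `0` when `d` is
negative or exceeds the number of variables. -/
noncomputable def esymList (l : List (MvPolynomial ℕ ℤ)) (d : ℤ) : MvPolynomial ℕ ℤ :=
  if d < 0 then 0 else ((l.sublistsLen d.toNat).map List.prod).sum

/-- The list of variables `x_a, x_{a+1}, …, x_{a+b-1}`. -/
noncomputable def xs (a b : ℕ) : List (MvPolynomial ℕ ℤ) :=
  (List.range' a b).map MvPolynomial.X

/-!
Expanding the two elementary symmetric polynomials in the summand indexed by `(a, j)` yields the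
squarefree monomials `x^S` with `|S| = n - m₀ - 1` such that `j, j + a ∉ S` and exactly
`m₀ - h - 1` points of the complement `G = {1, …, n} \ S` lie strictly between `j` and `j + a`.
Hence the coefficient of `x^S` on the right counts the pairs of elements of `G`, a set of size
`m₀ + 1`, separated by exactly `m₀ - h - 1` others. Listing `G` increasingly, these are the pairs
of positions `(i, i + m₀ - h)`, and there are `h + 1` of them.
-/

open Finset MvPolynomial

namespace Finset

theorem sum_powersetCard_mul_sum_powersetCard {α R : Type*} [DecidableEq α] [CommSemiring R]
    (f : α → R) {s t : Finset α} (hst : Disjoint s t) (k l : ℕ) :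
    (∑ u ∈ powersetCard k s, ∏ i ∈ u, f i) * (∑ v ∈ powersetCard l t, ∏ i ∈ v, f i) =
      ∑ w ∈ powersetCard (k + l) (s ∪ t) with #(w ∩ s) = k, ∏ i ∈ w, f i := by
  have hsplit : ∀ {u v}, u ⊆ s → v ⊆ t → (u ∪ v) ∩ s = u ∧ (u ∪ v) ∩ t = v := fun hu hv =>
    ⟨by rw [union_inter_distrib_right, inter_eq_left.2 hu,
          disjoint_iff_inter_eq_empty.1 (hst.symm.mono_left hv), union_empty],
     by rw [union_inter_distrib_right, inter_eq_left.2 hv,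
          disjoint_iff_inter_eq_empty.1 (hst.mono_left hu), empty_union]⟩
  rw [sum_mul_sum, ← sum_product']
  refine sum_nbij' (fun p => p.1 ∪ p.2) (fun w => (w ∩ s, w ∩ t)) ?_ ?_ ?_ ?_ ?_
  · rintro ⟨u, v⟩ huv
    simp only [mem_product, mem_powersetCard, mem_filter] at huv ⊢
    obtain ⟨⟨hu, rfl⟩, hv, rfl⟩ := huv
    exact ⟨⟨union_subset_union hu hv, card_union_of_disjoint (hst.mono hu hv)⟩,
      by rw [(hsplit hu hv).1]⟩
  · intro w hw
    simp only [mem_product, mem_powersetCard, mem_filter] at hw ⊢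
    obtain ⟨⟨hw, hcard⟩, hs⟩ := hw
    have := card_union_of_disjoint
      (hst.mono (inter_subset_right (s₁ := w)) (inter_subset_right (s₁ := w)))
    rw [← inter_union_distrib_left, inter_eq_left.2 hw] at this
    exact ⟨⟨inter_subset_right, hs⟩, inter_subset_right, by omega⟩
  · rintro ⟨u, v⟩ huv
    simp only [mem_product, mem_powersetCard] at huv
    rw [(hsplit huv.1.1 huv.2.1).1, (hsplit huv.1.1 huv.2.1).2]
  · intro w hw
    simp only [mem_filter, mem_powersetCard] at hw
    rw [← inter_union_distrib_left, inter_eq_left.2 hw.1.1]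
  · rintro ⟨u, v⟩ huv
    simp only [mem_product, mem_powersetCard] at huv
    exact (prod_union (hst.mono huv.1.1 huv.2.1)).symm

theorem card_filter_card_inter_Ioo_eq {α : Type*} [LinearOrder α] [LocallyFiniteOrder α]
    (G : Finset α) (k : ℕ) :
    #{p ∈ G ×ˢ G | p.1 < p.2 ∧ #(G ∩ Ioo p.1 p.2) = k} = #G - (k + 1) := by
  set f := G.orderEmbOfFin rfl
  have hmem : ∀ x, x ∈ G ↔ ∃ i, f i = x := fun x => by
    rw [← mem_coe, ← range_orderEmbOfFin G rfl]; rfl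
  have hgap : ∀ i j, #(G ∩ Ioo (f i) (f j)) = j - i - 1 := fun i j => by
    have : G ∩ Ioo (f i) (f j) = (Ioo i j).map f.toEmbedding := by
      ext x
      simp only [mem_inter, hmem, mem_map, mem_Ioo, RelEmbedding.coe_toEmbedding]
      constructor
      · rintro ⟨⟨m, rfl⟩, h₁, h₂⟩
        exact ⟨m, ⟨f.lt_iff_lt.1 h₁, f.lt_iff_lt.1 h₂⟩, rfl⟩
      · rintro ⟨m, ⟨h₁, h₂⟩, rfl⟩
        exact ⟨⟨m, rfl⟩, f.lt_iff_lt.2 h₁, f.lt_iff_lt.2 h₂⟩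
    rw [this, card_map, Fin.card_Ioo]
  have himage : {p ∈ G ×ˢ G | p.1 < p.2 ∧ #(G ∩ Ioo p.1 p.2) = k} =
      univ.image fun i : Fin (#G - (k + 1)) =>
        (f ⟨i, by omega⟩, f ⟨i + k + 1, by omega⟩) := by
    ext ⟨x, y⟩
    simp only [mem_filter, mem_product, hmem, mem_image, mem_univ, true_and, Prod.mk.injEq]
    constructor
    · rintro ⟨⟨⟨i, rfl⟩, ⟨j, rfl⟩⟩, hij, hk⟩
      rw [f.lt_iff_lt, Fin.lt_def] at hij
      rw [hgap] at hk
      exact ⟨⟨i, by omega⟩, rfl, by congr 1; ext; simp only; omega⟩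
    · rintro ⟨i, rfl, rfl⟩
      refine ⟨⟨⟨_, rfl⟩, ⟨_, rfl⟩⟩, f.lt_iff_lt.2 (Fin.lt_def.2 ?_), ?_⟩
      · simp only; omega
      · rw [hgap]; simp only; omega
  rw [himage, card_image_of_injective, card_univ, Fintype.card_fin]
  intro i j hij
  simp only [Prod.mk.injEq, f.injective.eq_iff, Fin.mk.injEq] at hij
  exact Fin.ext hij.1

end Finset

theorem esymList_natCast (l : List (MvPolynomial ℕ ℤ)) (k : ℕ) :
    esymList l k = (l : Multiset (MvPolynomial ℕ ℤ)).esymm k := by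
  simp [esymList, Multiset.esymm, Multiset.powersetCard_coe, Function.comp_def]

theorem esymList_map_X {l : List ℕ} (hl : l.Nodup) (k : ℕ) :
    esymList (l.map X) k = ∑ s ∈ powersetCard k l.toFinset, ∏ i ∈ s, (X i : MvPolynomial ℕ ℤ) := by
  rw [esymList_natCast, ← esymm_map_val, List.toFinset_val, List.dedup_eq_self.2 hl,
    Multiset.map_coe]

theorem esymList_of_neg {l : List (MvPolynomial ℕ ℤ)} {d : ℤ} (hd : d < 0) : esymList l d = 0 :=
  if_pos hd

theorem esymList_window_mul_esymList_outside {n a j : ℕ} (hja : j + a ≤ n) (r k : ℕ) :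
    esymList (xs (j + 1) (a - 1)) k *
        esymList (xs (j + a + 1) (n - (j + a)) ++ xs 1 (j - 1)) ((r : ℤ) - k) =
      ∑ S ∈ powersetCard r (Icc 1 n) with j ∉ S ∧ j + a ∉ S ∧ #(S ∩ Ioo j (j + a)) = k,
        ∏ i ∈ S, (X i : MvPolynomial ℕ ℤ) := by
  rcases lt_or_ge r k with hrk | hkr
  · rw [esymList_of_neg (d := (r : ℤ) - k) (by omega), mul_zero, eq_comm, sum_eq_zero]
    intro S hS
    simp only [mem_filter, mem_powersetCard] at hS
    have := card_le_card (inter_subset_left (s₁ := S) (s₂ := Ioo j (j + a)))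
    omega
  set I := (List.range' (j + 1) (a - 1)).toFinset
  set O := (List.range' (j + a + 1) (n - (j + a)) ++ List.range' 1 (j - 1)).toFinset
  have hI : I = Ioo j (j + a) := by
    ext x; simp only [I, List.mem_toFinset, List.mem_range'_1, mem_Ioo]; omega
  have hO : ∀ x, x ∈ O ↔ x ∈ Icc 1 n ∧ ¬ (j ≤ x ∧ x ≤ j + a) := by
    intro x; simp only [O, List.mem_toFinset, List.mem_append, List.mem_range'_1, mem_Icc]; omega
  have hIO : Disjoint I O := by
    rw [disjoint_left]; intro x hx hx'; rw [hI, mem_Ioo] at hx; rw [hO] at hx'; omega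
  have hOnodup : (List.range' (j + a + 1) (n - (j + a)) ++ List.range' 1 (j - 1)).Nodup :=
    List.nodup_append.2 ⟨List.nodup_range', List.nodup_range', fun x hx y hy => by
      rw [List.mem_range'_1] at hx hy; omega⟩
  rw [show (r : ℤ) - k = ((r - k : ℕ) : ℤ) by omega, xs, xs, xs, ← List.map_append,
    esymList_map_X List.nodup_range', esymList_map_X hOnodup,
    sum_powersetCard_mul_sum_powersetCard _ hIO, Nat.add_sub_cancel' hkr]
  have hcover : I ∪ O = Icc 1 n \ {j, j + a} := by
    ext x; simp only [mem_union, hI, mem_Ioo, hO, mem_sdiff, mem_Icc, mem_insert, mem_singleton]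
    omega
  refine sum_congr ?_ fun _ _ => rfl
  ext S
  simp only [mem_filter, mem_powersetCard, hcover, subset_sdiff, disjoint_insert_right,
    disjoint_singleton_right, ← hI]
  tauto

theorem card_windows_eq {n m₀ h : ℕ} (hmn : m₀ < n) (hh : h < m₀) {S : Finset ℕ}
    (hSn : S ⊆ Icc 1 n) (hS : #S = n - m₀ - 1) :
    #{p ∈ (Icc (m₀ - h) (n - 1)).sigma (fun a => Icc 1 (n - a)) |
        p.2 ∉ S ∧ p.2 + p.1 ∉ S ∧ #(S ∩ Ioo p.2 (p.2 + p.1)) = p.1 + h - m₀} = h + 1 := by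
  set G := Icc 1 n \ S
  have hG : #G = m₀ + 1 := by rw [card_sdiff_of_subset hSn, Nat.card_Icc, hS]; omega
  have hsplit : ∀ {i i'}, 1 ≤ i → i' ≤ n → #(S ∩ Ioo i i') + #(G ∩ Ioo i i') = i' - i - 1 := by
    intro i i' hi hi'
    have hGI : G ∩ Ioo i i' = Ioo i i' \ S := by
      rw [sdiff_inter_right_comm, inter_eq_right.2]
      intro x; simp only [mem_Ioo, mem_Icc]; omega
    rw [hGI, inter_comm, card_inter_add_card_sdiff, Nat.card_Ioo]
  have hmemG : ∀ x, x ∈ G ↔ (1 ≤ x ∧ x ≤ n) ∧ x ∉ S := fun x => by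
    simp only [G, mem_sdiff, mem_Icc]
  rw [show h + 1 = #G - (m₀ - h - 1 + 1) by omega, ← card_filter_card_inter_Ioo_eq]
  refine card_nbij' (fun p => (p.2, p.2 + p.1)) (fun q => ⟨q.2 - q.1, q.1⟩) ?_ ?_ ?_ ?_
  · rintro ⟨a, j⟩ hp
    simp only [coe_filter, mem_sigma, mem_Icc, Set.mem_ofPred_eq] at hp
    obtain ⟨⟨⟨ha₁, ha₂⟩, hj₁, hj₂⟩, hjS, hjaS, hcard⟩ := hp
    have := hsplit (i := j) (i' := j + a) (by omega) (by omega)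
    simp only [coe_filter, mem_product, hmemG, Set.mem_ofPred_eq]
    exact ⟨⟨⟨⟨by omega, by omega⟩, hjS⟩, ⟨by omega, by omega⟩, hjaS⟩, by omega, by omega⟩
  · rintro ⟨i, i'⟩ hq
    simp only [coe_filter, mem_product, hmemG, Set.mem_ofPred_eq] at hq
    obtain ⟨⟨⟨⟨hi₁, hi₂⟩, hiS⟩, ⟨hi'₁, hi'₂⟩, hi'S⟩, hlt, hcard⟩ := hq
    have := hsplit (i := i) (i' := i') (by omega) (by omega)
    simp only [coe_filter, mem_sigma, mem_Icc, Set.mem_ofPred_eq, Nat.add_sub_cancel' hlt.le]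
    exact ⟨⟨⟨by omega, by omega⟩, by omega, by omega⟩, hiS, hi'S, by omega⟩
  · rintro ⟨a, j⟩ -
    simp
  · rintro ⟨i, i'⟩ hq
    simp only [coe_filter, mem_product, Set.mem_ofPred_eq] at hq
    simp only [Nat.add_sub_cancel' hq.2.1.le]

/-- The identity of elementary symmetric polynomials (Lemma 5.2 of the paper):
`(h+1)·e_{n−m₀−1}(x₁,…,xₙ)
  = Σ_{a=m₀−h}^{n−1} Σ_{j=1}^{n−a} e_{h−m₀+a}(x_{j+1},…,x_{j+a−1})
      · e_{n−h−1−a}(x_{j+a+1},…,xₙ,x₁,…,x_{j−1})` in `ℤ[x₁,…,xₙ]`. -/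
theorem stmt_0 (n m₀ : ℕ) (hm₀ : 0 < m₀) (hmn : m₀ < n) (h : ℕ) (hh : h ≤ m₀ - 1) :
    ((h : ℤ) + 1) • esymList (xs 1 n) ((n : ℤ) - (m₀ : ℤ) - 1) =
      ∑ a ∈ Finset.Icc (m₀ - h) (n - 1), ∑ j ∈ Finset.Icc 1 (n - a),
        esymList (xs (j + 1) (a - 1)) ((h : ℤ) - (m₀ : ℤ) + (a : ℤ)) *
          esymList (xs (j + a + 1) (n - (j + a)) ++ xs 1 (j - 1))
            ((n : ℤ) - (h : ℤ) - 1 - (a : ℤ)) := by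
  have hLHS : esymList (xs 1 n) ((n : ℤ) - m₀ - 1) =
      ∑ S ∈ powersetCard (n - m₀ - 1) (Icc 1 n), ∏ i ∈ S, (X i : MvPolynomial ℕ ℤ) := by
    rw [show (n : ℤ) - m₀ - 1 = ((n - m₀ - 1 : ℕ) : ℤ) by omega, xs,
      esymList_map_X List.nodup_range', List.toFinset_range'_1_1]
  have hterm : ∀ a ∈ Icc (m₀ - h) (n - 1), ∀ j ∈ Icc 1 (n - a),
      esymList (xs (j + 1) (a - 1)) ((h : ℤ) - m₀ + a) *
          esymList (xs (j + a + 1) (n - (j + a)) ++ xs 1 (j - 1)) ((n : ℤ) - h - 1 - a) =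
        ∑ S ∈ powersetCard (n - m₀ - 1) (Icc 1 n) with
          j ∉ S ∧ j + a ∉ S ∧ #(S ∩ Ioo j (j + a)) = a + h - m₀, ∏ i ∈ S, X i := by
    intro a ha j hj
    rw [mem_Icc] at ha hj
    convert esymList_window_mul_esymList_outside (n := n) (a := a) (j := j) (by omega)
      (n - m₀ - 1) (a + h - m₀) using 3 <;> omega
  rw [hLHS, sum_congr rfl fun a ha => sum_congr rfl (hterm a ha), sum_sigma']
  simp_rw [sum_filter]
  rw [sum_comm, smul_sum]
  refine sum_congr rfl fun S hS => ?_
  rw [mem_powersetCard] at hS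
  rw [← sum_filter, sum_const, card_windows_eq hmn (by omega) hS.1 hS.2, ← natCast_zsmul,
    Nat.cast_add_one]
end

section
/- Let m₀, m₁ ≥ 1 be integers, n = m₀ + m₁, let x₁,…,xₙ > 0 be real numbers and t ∈ [0,1). For η ∈ {0,1}ⁿ with exactly m₁ entries equal to 1, set π(η) = (∏_{i : η_i = 1} x_i)/e_{m₁}(x₁,…,xₙ). Then Σ_{h=0}^{m₀−1} Σ_{j=1}^{n−m₀+h} Σ_{k=j+1}^{n} (t^h/([m₀]_t · x_k)) · Σ_η π(η) = ((Σ_{h=0}^{m₀−1} (h+1) t^h)/[m₀]_t) · e_{m₁−1}(x₁,…,xₙ)/e_{m₁}(x₁,…,xₙ), where the innermost sum runs over all η ∈ {0,1}ⁿ with exactly m₁ ones such that η_k = 1, η_j = 0, and η has exactly h entries equal to 0 among the cyclic positions k+1, k+2, …, n, 1, …, j−1. (This sum is the stationary current of the single-species t-PushTASEP across the edge from site n to site 1.) -/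
/-- The elementary symmetric polynomial `e_d` evaluated on the list of reals `l`,
with the convention `e_0 = 1` and `e_d = 0` when `d` exceeds the number of variables. -/
def esymR (l : List ℝ) (d : ℕ) : ℝ := ((l.sublistsLen d).map List.prod).sum

/-- The `t`-analogue `[m]_t = 1 + t + ⋯ + t^{m-1}`. -/
def tnum (t : ℝ) (m : ℕ) : ℝ := ∑ i ∈ Finset.range m, t ^ i

/-!
Write `S = insert k T`. The factor `1 / x k` turns `∏_{i ∈ S} x i` into `∏_{i ∈ T} x i`, so for
fixed `h` the left side is `t^h / ([m₀]_t e_{m₁})` times a weighted count of pairs `(j, k)` for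
each `T` of size `m₁ - 1`. The complement `C` of `T` in `{1, …, n}` has `m₀ + 1` elements, and
the admissible pairs are exactly the pairs `j < k` in `C` with `h` elements of `C` outside
`[j, k]`: the `a`-th and `(a + m₀ - h)`-th elements of `C` for `a = 0, …, h`. Hence every `T`
is counted `h + 1` times, and summing over `T` gives `(h + 1) e_{m₁ - 1}`. The cutoff
`j ≤ n - m₀ + h` excludes no such pair: each site below `j` lies in `T` or is one of the at most
`h` elements of `C` below `j`.
-/

open Finset

theorem esymR_eq_esymm (l : List ℝ) (d : ℕ) : esymR l d = (l : Multiset ℝ).esymm d := by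
  rw [esymR, Multiset.esymm, Multiset.powersetCard_coe, Multiset.map_coe, Multiset.sum_coe,
    List.map_map]
  congr 2

theorem esymR_map_range' (n : ℕ) (x : ℕ → ℝ) (d : ℕ) :
    esymR ((List.range' 1 n).map x) d = ∑ T ∈ (Icc 1 n).powersetCard d, ∏ i ∈ T, x i := by
  rw [esymR_eq_esymm, ← Multiset.map_coe, ← Finset.esymm_map_val]
  congr

namespace Finset

section orderEmbOfFin

variable {α : Type*} [LinearOrder α] (s : Finset α) {k : ℕ} (hs : #s = k)
include hs

theorem card_filter_lt_orderEmbOfFin (i : Fin k) : #{c ∈ s | c < s.orderEmbOfFin hs i} = i := by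
  have hmap := s.map_orderEmbOfFin_univ hs
  generalize s.orderEmbOfFin hs = e at hmap ⊢
  subst hmap
  simp [filter_map, filter_gt_eq_Iio]

theorem card_filter_orderEmbOfFin_lt (i : Fin k) :
    #{c ∈ s | s.orderEmbOfFin hs i < c} = k - 1 - i := by
  have hmap := s.map_orderEmbOfFin_univ hs
  generalize s.orderEmbOfFin hs = e at hmap ⊢
  subst hmap
  simp [filter_map, filter_lt_eq_Ioi]

end orderEmbOfFin

end Finset

theorem Fin.card_filter_lt_and_sub_add_eq (m h : ℕ) (hh : h < m) :
    #{p : Fin (m + 1) × Fin (m + 1) | p.1 < p.2 ∧ m - p.2 + p.1 = h} = h + 1 := by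
  rw [← card_range (h + 1)]
  refine card_nbij' (fun p => p.1) (fun a => (Fin.ofNat _ a, Fin.ofNat _ (a + (m - h))))
    ?_ ?_ ?_ ?_ <;>
  simp only [coe_range, Set.mem_Iio, coe_filter, Set.mem_ofPred_eq, mem_univ, true_and,
      Fin.lt_def, Fin.val_ofNat, Prod.ext_iff, Fin.ext_iff, Set.MapsTo, Set.LeftInvOn] <;>
  intro p hp
  · omega
  · rw [Nat.mod_eq_of_lt (by omega), Nat.mod_eq_of_lt (by omega)]
    omega
  · rw [Nat.mod_eq_of_lt p.1.isLt, Nat.mod_eq_of_lt (by omega)]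
    omega
  · exact Nat.mod_eq_of_lt (by omega)

theorem Finset.card_pairs_with_card_outside_eq {α : Type*} [LinearOrder α] (C : Finset α)
    {m h : ℕ} (hC : #C = m + 1) (hh : h < m) :
    #{p ∈ C ×ˢ C | p.1 < p.2 ∧ #{c ∈ C | p.2 < c} + #{c ∈ C | c < p.1} = h} = h + 1 := by
  have hprod : C ×ˢ C = (univ ×ˢ univ).map
      ((C.orderEmbOfFin hC).toEmbedding.prodMap (C.orderEmbOfFin hC).toEmbedding) := by
    rw [prodMap_map_product, map_orderEmbOfFin_univ]
  rw [hprod, filter_map, card_map, ← Fin.card_filter_lt_and_sub_add_eq m h hh]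
  congr 1
  ext p
  rw [mem_filter, mem_filter]
  simp [card_filter_lt_orderEmbOfFin, card_filter_orderEmbOfFin_lt]

theorem Finset.sum_powerset_erase_eq_sum_powersetCard {α β : Type*} [DecidableEq α]
    [AddCommMonoid β] {s : Finset α} {a : α} (ha : a ∈ s) (m : ℕ) (p : Finset α → Prop)
    [DecidablePred p] (f : Finset α → β) :
    ∑ S ∈ s.powerset.filter (fun S => #S = m + 1 ∧ a ∈ S ∧ p S), f (S.erase a)
      = ∑ T ∈ s.powersetCard m, if a ∉ T ∧ p (insert a T) then f T else 0 := by
  rw [← sum_filter]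
  refine sum_nbij' (fun S => S.erase a) (fun T => insert a T) ?_ ?_ ?_ ?_ (fun _ _ => rfl)
  · intro S hS
    simp only [mem_filter, mem_powerset, mem_powersetCard] at hS ⊢
    obtain ⟨hSs, hcard, haS, hp⟩ := hS
    refine ⟨⟨(erase_subset a S).trans hSs, by rw [card_erase_of_mem haS, hcard]; rfl⟩,
      notMem_erase a S, ?_⟩
    rwa [insert_erase haS]
  · intro T hT
    simp only [mem_filter, mem_powerset, mem_powersetCard] at hT ⊢
    obtain ⟨⟨hTs, hcard⟩, haT, hp⟩ := hT
    exact ⟨insert_subset ha hTs, by rw [card_insert_of_notMem haT, hcard], mem_insert_self a T, hp⟩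
  · intro S hS
    exact insert_erase (mem_filter.1 hS).2.2.1
  · intro T hT
    exact erase_insert (mem_filter.1 hT).2.1

theorem card_filter_arc_eq {n j k : ℕ} (T : Finset ℕ) (hjk : j < k) (hk : k ≤ n) :
    #{i ∈ Icc (k + 1) n ∪ Ico 1 j | i ∉ insert k T}
      = #{c ∈ Icc 1 n \ T | k < c} + #{c ∈ Icc 1 n \ T | c < j} := by
  rw [filter_union, card_union_of_disjoint]
  · congr 2 <;> ext i <;> simp only [mem_filter, mem_Icc, mem_Ico, mem_sdiff, mem_insert] <;> grind
  · refine disjoint_filter_filter (disjoint_left.2 fun i hi hi' => ?_)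
    simp only [mem_Icc, mem_Ico] at hi hi'
    omega

theorem sub_one_le_card_filter_lt_add_card {n j : ℕ} {T : Finset ℕ} (hj : j ≤ n) :
    j - 1 ≤ #{c ∈ Icc 1 n \ T | c < j} + #T := by
  calc j - 1 = #(Ico 1 j) := (Nat.card_Ico 1 j).symm
    _ ≤ #({c ∈ Icc 1 n \ T | c < j} ∪ T) := by
      refine card_le_card fun i hi => ?_
      simp only [mem_Ico, mem_union, mem_filter, mem_sdiff, mem_Icc] at hi ⊢
      by_cases hiT : i ∈ T
      · exact Or.inr hiT
      · exact Or.inl ⟨⟨⟨hi.1, by omega⟩, hiT⟩, hi.2⟩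
    _ ≤ _ := card_union_le _ _

theorem card_arc_pairs {m₀ m n h : ℕ} (hn : n = m₀ + (m + 1)) (hh : h < m₀) {T : Finset ℕ}
    (hT : T ⊆ Icc 1 n) (hTcard : #T = m) :
    #{p ∈ Icc 1 (n - m₀ + h) ×ˢ Icc 1 n | p.1 < p.2 ∧ p.2 ∉ T ∧ p.1 ∉ insert p.2 T ∧
        #{i ∈ Icc (p.2 + 1) n ∪ Ico 1 p.1 | i ∉ insert p.2 T} = h} = h + 1 := by
  have hC : #(Icc 1 n \ T) = m₀ + 1 := by
    rw [card_sdiff_of_subset hT, Nat.card_Icc, hTcard]; omega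
  rw [← card_pairs_with_card_outside_eq _ hC hh]
  congr 1
  ext ⟨j, k⟩
  simp only [mem_filter, mem_product, mem_sdiff]
  constructor
  · rintro ⟨⟨hj, hk⟩, hjk, hkT, hjkT, harc⟩
    have hjT : j ∉ T := fun hjT => hjkT (mem_insert_of_mem hjT)
    rw [card_filter_arc_eq T hjk (mem_Icc.1 hk).2] at harc
    exact ⟨⟨⟨by simp only [mem_Icc] at hj hk ⊢; omega, hjT⟩, hk, hkT⟩, hjk, harc⟩
  · rintro ⟨⟨⟨hj, hjT⟩, hk, hkT⟩, hjk, harc⟩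
    have hbound := sub_one_le_card_filter_lt_add_card (T := T) (mem_Icc.1 hj).2
    refine ⟨⟨?_, hk⟩, hjk, hkT, by simp [hjk.ne, hjT],
      by rwa [card_filter_arc_eq T hjk (mem_Icc.1 hk).2]⟩
    simp only [mem_Icc] at hj ⊢
    omega

theorem sum_arc_pairs_div {m₀ m n h : ℕ} (hn : n = m₀ + (m + 1)) (hh : h < m₀) {x : ℕ → ℝ}
    (hx : ∀ i ∈ Icc 1 n, x i ≠ 0) :
    ∑ j ∈ Icc 1 (n - m₀ + h), ∑ k ∈ Icc (j + 1) n,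
      (∑ S ∈ (Icc 1 n).powerset.filter (fun S => #S = m + 1 ∧ k ∈ S ∧ j ∉ S ∧
          #{i ∈ Icc (k + 1) n ∪ Ico 1 j | i ∉ S} = h), ∏ i ∈ S, x i) / x k
      = (h + 1) * ∑ T ∈ (Icc 1 n).powersetCard m, ∏ i ∈ T, x i := by
  calc _ = ∑ j ∈ Icc 1 (n - m₀ + h), ∑ k ∈ Icc (j + 1) n, ∑ T ∈ (Icc 1 n).powersetCard m,
        if k ∉ T ∧ j ∉ insert k T ∧ #{i ∈ Icc (k + 1) n ∪ Ico 1 j | i ∉ insert k T} = h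
        then ∏ i ∈ T, x i else 0 := by
        refine sum_congr rfl fun j _ => sum_congr rfl fun k hk => ?_
        have hk' : k ∈ Icc 1 n :=
          mem_Icc.2 ⟨(Nat.le_add_left 1 j).trans (mem_Icc.1 hk).1, (mem_Icc.1 hk).2⟩
        rw [sum_div, ← sum_powerset_erase_eq_sum_powersetCard hk' m
          (fun S => j ∉ S ∧ #{i ∈ Icc (k + 1) n ∪ Ico 1 j | i ∉ S} = h) (fun T => ∏ i ∈ T, x i)]
        refine sum_congr rfl fun S hS => ?_
        rw [← mul_prod_erase S x (mem_filter.1 hS).2.2.1, mul_div_cancel_left₀ _ (hx k hk')]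
    _ = ∑ p ∈ Icc 1 (n - m₀ + h) ×ˢ Icc 1 n with p.1 < p.2, ∑ T ∈ (Icc 1 n).powersetCard m,
        if p.2 ∉ T ∧ p.1 ∉ insert p.2 T ∧
          #{i ∈ Icc (p.2 + 1) n ∪ Ico 1 p.1 | i ∉ insert p.2 T} = h
        then ∏ i ∈ T, x i else 0 := by
        refine (sum_finset_product' _ _ _ fun p => ?_).symm
        simp only [mem_filter, mem_product, mem_Icc]
        omega
    _ = ∑ T ∈ (Icc 1 n).powersetCard m, (h + 1 : ℝ) * ∏ i ∈ T, x i := by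
        rw [sum_comm]
        refine sum_congr rfl fun T hT => ?_
        rw [← sum_filter, sum_const, filter_filter, nsmul_eq_mul,
          card_arc_pairs hn hh (mem_powersetCard.1 hT).1 (mem_powersetCard.1 hT).2, Nat.cast_add_one]
    _ = _ := (mul_sum _ _ _).symm

theorem stmt_1_general (m₀ m₁ n : ℕ) (hm₁ : 1 ≤ m₁) (hn : n = m₀ + m₁)
    (x : ℕ → ℝ) (hx : ∀ i ∈ Finset.Icc 1 n, 0 < x i)
    (t : ℝ) :
    (∑ h ∈ Finset.range m₀, ∑ j ∈ Finset.Icc 1 (n - m₀ + h), ∑ k ∈ Finset.Icc (j + 1) n,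
      (t ^ h / (tnum t m₀ * x k)) *
        ∑ S ∈ (Finset.Icc 1 n).powerset.filter (fun S =>
            S.card = m₁ ∧ k ∈ S ∧ j ∉ S ∧
            ((Finset.Icc (k + 1) n ∪ Finset.Ico 1 j).filter (fun i => i ∉ S)).card = h),
          (∏ i ∈ S, x i) / esymR ((List.range' 1 n).map x) m₁)
    = ((∑ h ∈ Finset.range m₀, ((h : ℝ) + 1) * t ^ h) / tnum t m₀) *
        (esymR ((List.range' 1 n).map x) (m₁ - 1) / esymR ((List.range' 1 n).map x) m₁) := by
  obtain ⟨m, rfl⟩ : ∃ m, m₁ = m + 1 := ⟨m₁ - 1, by omega⟩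
  rw [esymR_map_range', esymR_map_range', Nat.add_sub_cancel]
  set E := ∑ T ∈ (Icc 1 n).powersetCard (m + 1), ∏ i ∈ T, x i
  have hfactor : ∀ (h k : ℕ) (A : Finset (Finset ℕ)),
      t ^ h / (tnum t m₀ * x k) * ∑ S ∈ A, (∏ i ∈ S, x i) / E
        = t ^ h / (tnum t m₀ * E) * ((∑ S ∈ A, ∏ i ∈ S, x i) / x k) := by
    intro h k A
    rw [← sum_div]
    ring
  simp only [hfactor, ← mul_sum]
  rw [sum_div, sum_mul]
  refine sum_congr rfl fun h hh => ?_
  rw [sum_arc_pairs_div hn (mem_range.1 hh) fun i hi => (hx i hi).ne']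
  ring

/-- The current of the single-species `t`-PushTASEP across the edge from site `n` to
site `1` (Theorem 1.5 of the paper).  Configurations `η ∈ {0,1}ⁿ` with `m₁` ones are
encoded by the set `S ⊆ {1,…,n}` of sites `i` with `η_i = 1`, and
`π(S) = (∏_{i∈S} x_i)/e_{m₁}(x₁,…,xₙ)` is the stationary probability of `S`. -/
theorem stmt_1 (m₀ m₁ n : ℕ) (hm₀ : 1 ≤ m₀) (hm₁ : 1 ≤ m₁) (hn : n = m₀ + m₁)
    (x : ℕ → ℝ) (hx : ∀ i ∈ Finset.Icc 1 n, 0 < x i)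
    (t : ℝ) (ht0 : 0 ≤ t) (ht1 : t < 1) :
    (∑ h ∈ Finset.range m₀, ∑ j ∈ Finset.Icc 1 (n - m₀ + h), ∑ k ∈ Finset.Icc (j + 1) n,
      (t ^ h / (tnum t m₀ * x k)) *
        ∑ S ∈ (Finset.Icc 1 n).powerset.filter (fun S =>
            S.card = m₁ ∧ k ∈ S ∧ j ∉ S ∧
            ((Finset.Icc (k + 1) n ∪ Finset.Ico 1 j).filter (fun i => i ∉ S)).card = h),
          (∏ i ∈ S, x i) / esymR ((List.range' 1 n).map x) m₁)
    = ((∑ h ∈ Finset.range m₀, ((h : ℝ) + 1) * t ^ h) / tnum t m₀) *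
        (esymR ((List.range' 1 n).map x) (m₁ - 1) / esymR ((List.range' 1 n).map x) m₁) :=
  stmt_1_general m₀ m₁ n hm₁ hn x hx t
end

section
/- Let m₀, m₁ ≥ 1 be integers, n = m₀ + m₁, let x₁,…,xₙ > 0 be real numbers and t ∈ [0,1). Consider the single-species t-PushTASEP on a ring of n sites: its state space is the set of η ∈ {0,1}ⁿ with exactly m₁ entries equal to 1, and for sites k, j with η_k = 1 and η_j = 0 it jumps from η to the configuration obtained from η by setting position k to 0 and position j to 1, at rate r(η → ·) = (1/x_k)·t^a/[m₀]_t, where a is the number of positions i with η_i = 0 lying strictly between k and j in clockwise cyclic order (i.e., among the cyclic positions k+1,…,j−1); all other transition rates are 0. Then π(η) := (∏_{i : η_i = 1} x_i)/e_{m₁}(x₁,…,xₙ) defines a probability distribution (Σ_η π(η) = 1) satisfying the global balance equations: for every state η, Σ_{τ ≠ η} π(τ)·r(τ → η) = π(η)·Σ_{τ ≠ η} r(η → τ); that is, π is a stationary distribution of the single-species t-PushTASEP. -/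
/-- The set of sites of `{1,…,n}` lying strictly between `k` and `j` in clockwise
cyclic order, i.e. the cyclic positions `k+1, …, j-1`. -/
def cycBetween (n k j : ℕ) : Finset ℕ :=
  if k < j then Finset.Ioo k j else Finset.Icc (k + 1) n ∪ Finset.Ico 1 j

/-- The state space of the single-species `t`-PushTASEP: configurations `η ∈ {0,1}ⁿ`
with exactly `m₁` ones, encoded by the set of occupied sites. -/
def states (n m₁ : ℕ) : Finset (Finset ℕ) :=
  (Finset.Icc 1 n).powerset.filter (fun S => S.card = m₁)

/-- The jump rate of the single-species `t`-PushTASEP from configuration `S` to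
configuration `T`: a particle at `k ∈ S` jumps to a vacant site `j ∉ S`, producing
`T = (S ∖ {k}) ∪ {j}`, at rate `(1/x_k)·t^a/[m₀]_t` where `a` is the number of
vacancies strictly between `k` and `j` in clockwise cyclic order; all other rates
vanish. -/
noncomputable def rate1 (n m₀ : ℕ) (x : ℕ → ℝ) (t : ℝ) (S T : Finset ℕ) : ℝ :=
  ∑ k ∈ S, ∑ j ∈ Finset.Icc 1 n \ S,
    if T = insert j (S.erase k) then
      (1 / x k) * t ^ (((cycBetween n k j).filter (fun i => i ∉ S)).card) / tnum t m₀
    else 0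

/-- The stationary probability `π(S) = (∏_{i∈S} x_i)/e_{m₁}(x₁,…,xₙ)`. -/
noncomputable def piDist (n m₁ : ℕ) (x : ℕ → ℝ) (S : Finset ℕ) : ℝ :=
  (∏ i ∈ S, x i) / esymR ((List.range' 1 n).map x) m₁

/-!
Fix a state `S` and write `V` for its vacancies. For a particle at `k`, the vacancies listed
clockwise from `k` carry the exponents `0, 1, …, m₀ - 1`, so its total exit rate is `1/x_k`.
A state `T` entering `S` is `S` with the particle at some `j ∈ S` moved back to a vacancy
`k ∈ V`; then `π(T) = π(S) x_k/x_j`, and the exponent of the jump `k → j` counts the vacancies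
of `S` met going counterclockwise from `j` before `k`. For fixed `j` these are again
`0, …, m₀ - 1`, so the inflow is `π(S) ∑_{j∈S} 1/x_j`, which is the outflow. The normalisation
is the expansion of `e_{m₁}` as a sum over `m₁`-subsets.
-/

open Finset

theorem Finset.sum_comp_card_filter_lt {α β M : Type*} [LinearOrder β] [AddCommMonoid M]
    (V : Finset α) {f : α → β} (hf : Set.InjOn f V) (g : ℕ → M) :
    ∑ v ∈ V, g #{w ∈ V | f w < f v} = ∑ r ∈ range #V, g r := by
  set rank : α → ℕ := fun v => #{w ∈ V | f w < f v}
  have rank_lt_rank : ∀ a ∈ V, ∀ b ∈ V, f a < f b → rank a < rank b := by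
    intro a ha b hb hab
    refine card_lt_card ((ssubset_iff_of_subset fun w hw => ?_).2 ⟨a, ?_, ?_⟩)
    · simp only [mem_filter] at hw ⊢
      exact ⟨hw.1, hw.2.trans hab⟩
    · simpa using ⟨ha, hab⟩
    · simp
  have rank_injOn : Set.InjOn rank V := by
    intro a ha b hb hrank
    by_contra hne
    rcases lt_or_gt_of_ne (hf.ne ha hb hne) with h | h
    · exact (rank_lt_rank a ha b hb h).ne hrank
    · exact (rank_lt_rank b hb a ha h).ne' hrank
  have rank_lt_card : ∀ v ∈ V, rank v < #V :=
    fun v hv => card_lt_card ((ssubset_iff_of_subset (filter_subset _ _)).2 ⟨v, hv, by simp⟩)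
  have image_rank : V.image rank = range #V :=
    eq_of_subset_of_card_le (fun r hr => by
        obtain ⟨v, hv, rfl⟩ := mem_image.1 hr
        exact mem_range.2 (rank_lt_card v hv))
      (by rw [card_range, card_image_of_injOn rank_injOn])
  rw [← image_rank, sum_image rank_injOn]

namespace PushTASEP

variable {n : ℕ}

/-- Clockwise distance from `p` to `i` on the ring `{1, …, n}`; note `cycDist n p p = n`. -/
def cycDist (n p i : ℕ) : ℕ := if p < i then i - p else i + n - p

lemma cycDist_injOn {p : ℕ} (hp : p ∈ Icc 1 n) : Set.InjOn (cycDist n p) (Icc 1 n) := by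
  intro i hi j hj h
  simp only [coe_Icc, Set.mem_Icc, mem_Icc] at hp hi hj
  unfold cycDist at h
  split_ifs at h <;> omega

lemma cycBetween_eq_filter {k j : ℕ} (hk : k ∈ Icc 1 n) (hj : j ∈ Icc 1 n) :
    cycBetween n k j = {i ∈ Icc 1 n | cycDist n k i < cycDist n k j} := by
  ext i
  simp only [mem_Icc, mem_filter] at hk hj ⊢
  simp only [cycBetween, cycDist]
  split_ifs <;> simp only [mem_Ioo, mem_union, mem_Icc, mem_Ico] <;> omega

/-- Going clockwise, `i` lies strictly between `k` and `j` iff, starting from `j`, one meets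
`k` before `i`. -/
lemma cycDist_lt_cycDist_iff {i j k : ℕ} (hi : i ∈ Icc 1 n) (hj : j ∈ Icc 1 n)
    (hk : k ∈ Icc 1 n) (hjk : j ≠ k) :
    cycDist n k i < cycDist n k j ↔ i ≠ j ∧ cycDist n j k < cycDist n j i := by
  simp only [mem_Icc] at hi hj hk
  unfold cycDist
  split_ifs <;> omega

lemma sum_pow_card_filter_cycDist_lt {V : Finset ℕ} (hV : V ⊆ Icc 1 n) {k : ℕ}
    (hk : k ∈ Icc 1 n) (t : ℝ) :
    ∑ j ∈ V, t ^ #{w ∈ V | cycDist n k w < cycDist n k j} = tnum t #V :=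
  sum_comp_card_filter_lt V ((cycDist_injOn hk).mono (coe_subset.2 hV)) (t ^ ·)

lemma sum_pow_card_filter_lt_cycDist {V : Finset ℕ} (hV : V ⊆ Icc 1 n) {j : ℕ}
    (hj : j ∈ Icc 1 n) (t : ℝ) :
    ∑ k ∈ V, t ^ #{w ∈ V | cycDist n j k < cycDist n j w} = tnum t #V :=
  sum_comp_card_filter_lt (f := fun w => OrderDual.toDual (cycDist n j w)) V
    (((cycDist_injOn hj).mono (coe_subset.2 hV))) (t ^ ·)

lemma subset_of_mem_states {m : ℕ} {S : Finset ℕ} (hS : S ∈ states n m) : S ⊆ Icc 1 n :=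
  mem_powerset.1 (mem_filter.1 hS).1

def move (S : Finset ℕ) (k j : ℕ) : Finset ℕ := insert j (S.erase k)

section move

variable {S : Finset ℕ} {k j : ℕ}

lemma mem_move {i : ℕ} : i ∈ move S k j ↔ i = j ∨ (i ≠ k ∧ i ∈ S) := by
  simp [move]

lemma move_ne_self (hj : j ∉ S) : move S k j ≠ S :=
  fun h => hj (h ▸ mem_move.2 (Or.inl rfl))

lemma move_move (hk : k ∈ S) (hj : j ∉ S) : move (move S k j) j k = S := by
  have : j ∉ S.erase k := fun h => hj (mem_of_mem_erase h)
  rw [move, move, erase_insert this, insert_erase hk]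

lemma eq_and_eq_of_move_eq {k' j' : ℕ} (hk : k ∈ S) (hj : j ∉ S)
    (h : move S k j = move S k' j') : k = k' ∧ j = j' := by
  have hjk : ∀ {a b}, a ∈ S → b ∉ S → a ≠ b := fun ha hb hab => hb (hab ▸ ha)
  have hj_mem : j ∈ move S k' j' := h ▸ mem_move.2 (Or.inl rfl)
  have hk_not_mem : k ∉ move S k' j' := h ▸ by simp [mem_move, hjk hk hj]
  simp only [mem_move] at hj_mem hk_not_mem
  constructor
  · by_contra hkk'
    exact hk_not_mem (Or.inr ⟨hkk', hk⟩)
  · exact hj_mem.resolve_right fun h => hj h.2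

lemma move_mem_states {m : ℕ} (hS : S ∈ states n m) (hk : k ∈ S) (hj : j ∈ Icc 1 n \ S) :
    move S k j ∈ states n m := by
  simp only [states, mem_filter, mem_powerset, mem_sdiff] at hS hj ⊢
  refine ⟨insert_subset hj.1 ((erase_subset k S).trans hS.1), ?_⟩
  rw [move, card_insert_of_notMem fun h => hj.2 (mem_of_mem_erase h), card_erase_of_mem hk,
    hS.2]
  have := card_pos.2 ⟨k, hk⟩
  omega

end move

noncomputable def jumpRate (n m₀ : ℕ) (x : ℕ → ℝ) (t : ℝ) (S : Finset ℕ) (k j : ℕ) : ℝ :=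
  1 / x k * t ^ #{i ∈ cycBetween n k j | i ∉ S} / tnum t m₀

section rate

variable {m₀ : ℕ} {x : ℕ → ℝ} {t : ℝ} {S : Finset ℕ}

lemma rate1_eq_sum_ite (T : Finset ℕ) :
    rate1 n m₀ x t S T =
      ∑ k ∈ S, ∑ j ∈ Icc 1 n \ S, if T = move S k j then jumpRate n m₀ x t S k j else 0 :=
  rfl

lemma rate1_self : rate1 n m₀ x t S S = 0 :=
  sum_eq_zero fun _ _ => sum_eq_zero fun _ hj =>
    if_neg (move_ne_self (mem_sdiff.1 hj).2).symm

lemma rate1_move {k j : ℕ} (hk : k ∈ S) (hj : j ∈ Icc 1 n \ S) :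
    rate1 n m₀ x t S (move S k j) = jumpRate n m₀ x t S k j := by
  have hj' := (mem_sdiff.1 hj).2
  rw [rate1_eq_sum_ite, sum_eq_single_of_mem k hk, sum_eq_single_of_mem j hj, if_pos rfl]
  · exact fun j' _ hj'j => if_neg fun h => hj'j (eq_and_eq_of_move_eq hk hj' h).2.symm
  · exact fun k' _ hk'k => sum_eq_zero fun j' _ =>
      if_neg fun h => hk'k (eq_and_eq_of_move_eq hk hj' h).1.symm

lemma jumpRate_eq {k j : ℕ} (hk : k ∈ Icc 1 n) (hj : j ∈ Icc 1 n) :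
    jumpRate n m₀ x t S k j =
      1 / x k * t ^ #{w ∈ Icc 1 n \ S | cycDist n k w < cycDist n k j} / tnum t m₀ := by
  rw [jumpRate, cycBetween_eq_filter hk hj, filter_filter, sdiff_eq_filter, filter_filter]
  simp_rw [and_comm]

lemma jumpRate_move_eq {k j : ℕ} (hS : S ⊆ Icc 1 n) (hj : j ∈ S) (hk : k ∈ Icc 1 n \ S) :
    jumpRate n m₀ x t (move S j k) k j =
      1 / x k * t ^ #{w ∈ Icc 1 n \ S | cycDist n j k < cycDist n j w} / tnum t m₀ := by
  obtain ⟨hk, hkS⟩ := mem_sdiff.1 hk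
  have hjk : j ≠ k := fun h => hkS (h ▸ hj)
  rw [jumpRate_eq hk (hS hj)]
  congr 4
  ext i
  simp only [mem_filter, mem_sdiff, mem_move]
  constructor
  · rintro ⟨⟨hi, hi_move⟩, hlt⟩
    obtain ⟨hij, hlt⟩ := (cycDist_lt_cycDist_iff hi (hS hj) hk hjk).1 hlt
    exact ⟨⟨hi, fun hiS => hi_move (Or.inr ⟨hij, hiS⟩)⟩, hlt⟩
  · rintro ⟨⟨hi, hiS⟩, hlt⟩
    have hij : i ≠ j := fun h => hiS (h ▸ hj)
    have hik : i ≠ k := by rintro rfl; exact lt_irrefl _ hlt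
    refine ⟨⟨hi, ?_⟩, (cycDist_lt_cycDist_iff hi (hS hj) hk hjk).2 ⟨hij, hlt⟩⟩
    rintro (h | h)
    exacts [hik h, hiS h.2]

lemma sum_rate1_left {m₁ : ℕ} (hS : S ∈ states n m₁) :
    ∑ T ∈ states n m₁, rate1 n m₀ x t S T =
      ∑ k ∈ S, ∑ j ∈ Icc 1 n \ S, jumpRate n m₀ x t S k j := by
  simp_rw [rate1_eq_sum_ite]
  rw [sum_comm]
  refine sum_congr rfl fun k hk => ?_
  rw [sum_comm]
  exact sum_congr rfl fun j hj => by rw [sum_ite_eq', if_pos (move_mem_states hS hk hj)]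

lemma sum_mul_rate1_right {m₁ : ℕ} (F : Finset ℕ → ℝ) (hS : S ∈ states n m₁) :
    ∑ T ∈ states n m₁, F T * rate1 n m₀ x t T S =
      ∑ j ∈ S, ∑ k ∈ Icc 1 n \ S, F (move S j k) * jumpRate n m₀ x t (move S j k) k j := by
  set P := S ×ˢ (Icc 1 n \ S)
  set φ : ℕ × ℕ → Finset ℕ := fun p => move S p.1 p.2
  have image_subset : P.image φ ⊆ states n m₁ := by
    intro T hT
    obtain ⟨⟨j, k⟩, hp, rfl⟩ := mem_image.1 hT
    exact move_mem_states hS (mem_product.1 hp).1 (mem_product.1 hp).2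
  have rate1_eq_zero : ∀ T ∈ states n m₁, T ∉ P.image φ →
      F T * rate1 n m₀ x t T S = 0 := by
    intro T hT hTP
    refine mul_eq_zero_of_right _ (sum_eq_zero fun k hk => sum_eq_zero fun j hj => if_neg ?_)
    rintro rfl
    obtain ⟨hj, hjT⟩ := mem_sdiff.1 hj
    have hjk : k ≠ j := fun h => hjT (h ▸ hk)
    refine hTP (mem_image.2 ⟨(j, k), mem_product.2 ⟨?_, ?_⟩, move_move hk hjT⟩)
    · exact mem_move.2 (Or.inl rfl)
    · exact mem_sdiff.2 ⟨subset_of_mem_states hT hk, by simp [hjk]⟩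
  have injOn : Set.InjOn φ P := by
    rintro ⟨j, k⟩ hp ⟨j', k'⟩ hp' h
    obtain ⟨hj, hk⟩ := mem_product.1 hp
    obtain ⟨rfl, rfl⟩ := eq_and_eq_of_move_eq hj (mem_sdiff.1 hk).2 h
    rfl
  rw [← sum_subset image_subset rate1_eq_zero, sum_image injOn, sum_product]
  refine sum_congr rfl fun j hj => sum_congr rfl fun k hk => ?_
  have hkS := (mem_sdiff.1 hk).2
  have hjk : j ≠ k := fun h => hkS (h ▸ hj)
  have hj_move : j ∉ move S j k := by simp [mem_move, hjk]
  have := rate1_move (n := n) (m₀ := m₀) (x := x) (t := t) (k := k) (j := j)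
    (mem_move.2 (Or.inl rfl)) (mem_sdiff.2 ⟨subset_of_mem_states hS hj, hj_move⟩)
  rw [move_move hj hkS] at this
  rw [← this]

end rate

lemma esymR_map_range'_eq_sum (x : ℕ → ℝ) (d : ℕ) :
    esymR ((List.range' 1 n).map x) d = ∑ T ∈ (Icc 1 n).powersetCard d, ∏ i ∈ T, x i := by
  have hmap : (((List.range' 1 n).map x : List ℝ) : Multiset ℝ) = (Icc 1 n).val.map x := by
    rw [Nat.Icc_eq_range']
    simp
  have hesymm : ∀ l : List ℝ, esymR l d = Multiset.esymm (l : Multiset ℝ) d := fun l => by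
    simp [esymR, Multiset.esymm, Multiset.powersetCard_coe, Function.comp_def]
  rw [hesymm, hmap, Finset.esymm_map_val]

lemma sum_piDist_states {m₁ : ℕ} {x : ℕ → ℝ} (hx : ∀ i ∈ Icc 1 n, 0 < x i) (hm₁ : m₁ ≤ n) :
    ∑ S ∈ states n m₁, piDist n m₁ x S = 1 := by
  have hstates : states n m₁ = (Icc 1 n).powersetCard m₁ := by
    rw [states, powersetCard_eq_filter]
  have hpos : 0 < esymR ((List.range' 1 n).map x) m₁ := by
    rw [esymR_map_range'_eq_sum]
    refine sum_pos (fun T hT => prod_pos fun i hi => hx i ((mem_powersetCard.1 hT).1 hi))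
      (powersetCard_nonempty.2 (by simpa using hm₁))
  simp only [piDist]
  rw [← sum_div, hstates, ← esymR_map_range'_eq_sum, div_self hpos.ne']

lemma piDist_move_mul {m₁ : ℕ} {x : ℕ → ℝ} {S : Finset ℕ} {j k : ℕ} (hj : j ∈ S)
    (hk : k ∉ S) :
    piDist n m₁ x (move S j k) * x j = piDist n m₁ x S * x k := by
  have hk' : k ∉ S.erase j := fun h => hk (mem_of_mem_erase h)
  simp only [piDist, move, prod_insert hk', ← mul_prod_erase S x hj]
  ring

section balance

variable {m₀ m₁ : ℕ} {x : ℕ → ℝ} {t : ℝ} {S : Finset ℕ}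

/- The factor `[#V]_t/[m₀]_t` is `1`, but it is the same for inflow and outflow, so it never
needs to be evaluated. -/
lemma sum_rate1_erase_left (hS : S ∈ states n m₁) :
    ∑ T ∈ (states n m₁).erase S, rate1 n m₀ x t S T =
      (∑ k ∈ S, 1 / x k) * (tnum t #(Icc 1 n \ S) / tnum t m₀) := by
  rw [sum_erase _ rate1_self, sum_rate1_left hS, sum_mul]
  refine sum_congr rfl fun k hk => ?_
  have hk := subset_of_mem_states hS hk
  rw [← sum_pow_card_filter_cycDist_lt sdiff_subset hk t, sum_div, mul_sum]
  refine sum_congr rfl fun j hj => ?_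
  rw [jumpRate_eq hk (mem_sdiff.1 hj).1]
  ring

lemma sum_piDist_mul_rate1_erase_right (hx : ∀ i ∈ Icc 1 n, x i ≠ 0) (hS : S ∈ states n m₁) :
    ∑ T ∈ (states n m₁).erase S, piDist n m₁ x T * rate1 n m₀ x t T S =
      piDist n m₁ x S * (∑ j ∈ S, 1 / x j) * (tnum t #(Icc 1 n \ S) / tnum t m₀) := by
  have hS_sub := subset_of_mem_states hS
  rw [sum_erase _ (by rw [rate1_self, mul_zero]), sum_mul_rate1_right _ hS, mul_sum, sum_mul]
  refine sum_congr rfl fun j hj => ?_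
  rw [← sum_pow_card_filter_lt_cycDist sdiff_subset (hS_sub hj) t, sum_div, mul_sum]
  refine sum_congr rfl fun k hk => ?_
  have hxj := hx j (hS_sub hj)
  have hxk := hx k (mem_sdiff.1 hk).1
  have h := piDist_move_mul (n := n) (m₁ := m₁) (x := x) hj (mem_sdiff.1 hk).2
  rw [jumpRate_move_eq hS_sub hj hk]
  field_simp
  linear_combination t ^ #{w ∈ Icc 1 n \ S | cycDist n j k < cycDist n j w} / tnum t m₀ * h

end balance

end PushTASEP

theorem stmt_2_general (m₀ m₁ n : ℕ) (hn : n = m₀ + m₁)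
    (x : ℕ → ℝ) (hx : ∀ i ∈ Finset.Icc 1 n, 0 < x i)
    (t : ℝ) :
    (∑ S ∈ states n m₁, piDist n m₁ x S = 1) ∧
    ∀ S ∈ states n m₁,
      ∑ T ∈ (states n m₁).erase S, piDist n m₁ x T * rate1 n m₀ x t T S
        = piDist n m₁ x S * ∑ T ∈ (states n m₁).erase S, rate1 n m₀ x t S T := by
  refine ⟨PushTASEP.sum_piDist_states hx (by omega), fun S hS => ?_⟩
  rw [PushTASEP.sum_piDist_mul_rate1_erase_right (fun i hi => (hx i hi).ne') hS,
    PushTASEP.sum_rate1_erase_left hS, mul_assoc]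

/-- Proposition 2.4 of the paper: `π` is a probability distribution satisfying the
global balance equations, i.e. it is a stationary distribution of the single-species
`t`-PushTASEP on a ring of `n` sites. -/
theorem stmt_2 (m₀ m₁ n : ℕ) (hm₀ : 1 ≤ m₀) (hm₁ : 1 ≤ m₁) (hn : n = m₀ + m₁)
    (x : ℕ → ℝ) (hx : ∀ i ∈ Finset.Icc 1 n, 0 < x i)
    (t : ℝ) (ht0 : 0 ≤ t) (ht1 : t < 1) :
    (∑ S ∈ states n m₁, piDist n m₁ x S = 1) ∧
    ∀ S ∈ states n m₁,
      ∑ T ∈ (states n m₁).erase S, piDist n m₁ x T * rate1 n m₀ x t T S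
        = piDist n m₁ x S * ∑ T ∈ (states n m₁).erase S, rate1 n m₀ x t S T :=
  stmt_2_general m₀ m₁ n hn x hx t
end

section
/- The operators T₁,…,T_{n−1} on the field F of rational functions in x₁,…,xₙ over ℚ(q,t) satisfy the Hecke algebra relations: (T_i − t)(T_i + 1) = 0 for all 1 ≤ i ≤ n−1; T_i T_{i+1} T_i = T_{i+1} T_i T_{i+1} for all 1 ≤ i ≤ n−2; and T_i T_j = T_j T_i whenever |i − j| ≥ 2. -/
open MvPolynomial

set_option maxHeartbeats 1000000
set_option synthInstance.maxHeartbeats 400000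

noncomputable section

/-- The field `ℚ(q,t)`, realized as the fraction field of `ℚ[q,t]`. -/
abbrev Kqt : Type := FractionRing (MvPolynomial (Fin 2) ℚ)

/-- The element `q` of `ℚ(q,t)`. -/
def qK : Kqt := algebraMap (MvPolynomial (Fin 2) ℚ) Kqt (X 0)

/-- The element `t` of `ℚ(q,t)`. -/
def tK : Kqt := algebraMap (MvPolynomial (Fin 2) ℚ) Kqt (X 1)

/-- The polynomial ring `ℚ(q,t)[x₁,…,xₙ]`. -/
abbrev Rx (n : ℕ) : Type := MvPolynomial (Fin n) Kqt

/-- The field `F` of rational functions in `x₁,…,xₙ` over `ℚ(q,t)`. -/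
abbrev Fx (n : ℕ) : Type := FractionRing (Rx n)

/-- The canonical embedding of polynomials into rational functions. -/
def toF (n : ℕ) : Rx n →+* Fx n := algebraMap (Rx n) (Fx n)

/-- The variable `x_i` (1-based: `x_i` is the variable of index `i-1`). -/
def xF (n : ℕ) (i : Fin n) : Fx n := toF n (X i)

/-- The scalar `t` as a rational function. -/
def tF (n : ℕ) : Fx n := toF n (C tK)

/-- The scalar `q` as a rational function. -/
def qF (n : ℕ) : Fx n := toF n (C qK)

/-- The transposition of the (1-based) variables `x_i` and `x_{i+1}`. -/
def swapPerm (n i : ℕ) : Equiv.Perm (Fin n) :=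
  if h : 1 ≤ i ∧ i < n then Equiv.swap ⟨i - 1, by omega⟩ ⟨i, h.2⟩ else Equiv.refl _

/-- The operator `s_i`, interchanging the variables `x_i` and `x_{i+1}`,
as a field automorphism of `F`. -/
def sOp (n i : ℕ) : Fx n ≃+* Fx n :=
  IsFractionRing.ringEquivOfRingEquiv (renameEquiv Kqt (swapPerm n i)).toRingEquiv

/-- The operator `L_i f = ((t·x_i − x_{i+1})/(x_i − x_{i+1}))·(f − s_i f)`
(for `1 ≤ i ≤ n−1`). -/
def LOp (n i : ℕ) (f : Fx n) : Fx n :=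
  if h : 1 ≤ i ∧ i < n then
    ((tF n * xF n ⟨i - 1, by omega⟩ - xF n ⟨i, h.2⟩) /
        (xF n ⟨i - 1, by omega⟩ - xF n ⟨i, h.2⟩)) * (f - sOp n i f)
  else 0

/-- The Demazure–Lusztig operator `T_i f = t·f − L_i f`. -/
def TOp (n i : ℕ) (f : Fx n) : Fx n := tF n * f - LOp n i f

end

/- ### Auxiliary development -/

noncomputable section AuxDL

/-- The automorphism of `Fx n` induced by a permutation of the variables. -/
def permOp (n : ℕ) (σ : Equiv.Perm (Fin n)) : Fx n ≃+* Fx n :=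
  IsFractionRing.ringEquivOfRingEquiv (renameEquiv Kqt σ).toRingEquiv

lemma permOp_toF (n : ℕ) (σ : Equiv.Perm (Fin n)) (p : Rx n) :
    permOp n σ (toF n p) = toF n (rename σ p) :=
  IsFractionRing.ringEquivOfRingEquiv_algebraMap _ p

lemma permOp_comp (n : ℕ) (σ τ : Equiv.Perm (Fin n)) (f : Fx n) :
    permOp n σ (permOp n τ f) = permOp n (σ * τ) f := by
  have : ((permOp n σ : Fx n →+* Fx n).comp (permOp n τ : Fx n →+* Fx n)) =
      (permOp n (σ * τ) : Fx n →+* Fx n) := by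
    apply IsLocalization.ringHom_ext (nonZeroDivisors (Rx n))
    refine RingHom.ext fun p => ?_
    show permOp n σ (permOp n τ (toF n p)) = permOp n (σ * τ) (toF n p)
    rw [permOp_toF, permOp_toF, permOp_toF, rename_rename]
    rfl
  exact congrFun (congrArg (fun g : Fx n →+* Fx n => (g : Fx n → Fx n)) this) f

lemma permOp_one (n : ℕ) (f : Fx n) : permOp n 1 f = f := by
  have : ((permOp n 1 : Fx n →+* Fx n)) = RingHom.id (Fx n) := by
    apply IsLocalization.ringHom_ext (nonZeroDivisors (Rx n))
    refine RingHom.ext fun p => ?_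
    show permOp n 1 (toF n p) = toF n p
    rw [permOp_toF]
    simp [rename_id]
  exact congrFun (congrArg (fun g : Fx n →+* Fx n => (g : Fx n → Fx n)) this) f

lemma permOp_C (n : ℕ) (σ : Equiv.Perm (Fin n)) (c : Kqt) :
    permOp n σ (toF n (C c)) = toF n (C c) := by
  rw [permOp_toF, rename_C]

lemma permOp_X (n : ℕ) (σ : Equiv.Perm (Fin n)) (j : Fin n) :
    permOp n σ (xF n j) = xF n (σ j) := by
  rw [xF, permOp_toF, rename_X]; rfl

lemma xF_ne (n : ℕ) {a b : Fin n} (h : a ≠ b) : xF n a ≠ xF n b := by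
  intro he
  exact h (X_injective (IsFractionRing.injective (Rx n) (Fx n) he))

/-- `permOp` as a ring homomorphism. -/
def permHom (n : ℕ) (σ : Equiv.Perm (Fin n)) : Fx n →+* Fx n :=
  ((permOp n σ : Fx n ≃+* Fx n) : Fx n →+* Fx n)

lemma permHom_comp (n : ℕ) (σ τ : Equiv.Perm (Fin n)) (f : Fx n) :
    permHom n σ (permHom n τ f) = permHom n (σ * τ) f := permOp_comp n σ τ f

lemma permHom_one (n : ℕ) (f : Fx n) : permHom n 1 f = f := permOp_one n f

lemma permHom_C (n : ℕ) (σ : Equiv.Perm (Fin n)) (c : Kqt) :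
    permHom n σ (toF n (C c)) = toF n (C c) := permOp_C n σ c

lemma permHom_X (n : ℕ) (σ : Equiv.Perm (Fin n)) (j : Fin n) :
    permHom n σ (xF n j) = xF n (σ j) := permOp_X n σ j

lemma swap_braid {α : Type*} [DecidableEq α] {a b c : α}
    (hab : a ≠ b) (hbc : b ≠ c) (hac : a ≠ c) :
    Equiv.swap a b * Equiv.swap b c * Equiv.swap a b =
      Equiv.swap b c * Equiv.swap a b * Equiv.swap b c := by
  have h1 := Equiv.swap_mul_swap_mul_swap (x := c) (y := b) (z := a) hbc.symm hac.symm
  have h2 := Equiv.swap_mul_swap_mul_swap (x := a) (y := b) (z := c) hab hac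
  rw [Equiv.swap_comm b a, Equiv.swap_comm c b] at h1
  exact h1.trans ((h2.trans (Equiv.swap_comm c a)).symm)

lemma swap_disjoint_comm {α : Type*} [DecidableEq α] {a b c d : α}
    (hac : a ≠ c) (had : a ≠ d) (hbc : b ≠ c) (hbd : b ≠ d) :
    Equiv.swap a b * Equiv.swap c d = Equiv.swap c d * Equiv.swap a b := by
  have hdisj : (Equiv.swap a b).Disjoint (Equiv.swap c d) := by
    intro x
    by_cases hxa : x = a
    · subst hxa; right; exact Equiv.swap_apply_of_ne_of_ne hac had
    by_cases hxb : x = b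
    · subst hxb; right; exact Equiv.swap_apply_of_ne_of_ne hbc hbd
    · left; exact Equiv.swap_apply_of_ne_of_ne hxa hxb
  exact hdisj.commute.eq

section Abstract
variable {F : Type*} [Field F]

/-- The abstract Demazure–Lusztig operator attached to a homomorphism `σ`
and elements `t u v` of a field. -/
def Tab (t u v : F) (σ : F →+* F) (f : F) : F :=
  t * f - ((t * u - v) / (u - v)) * (f - σ f)

lemma quad_ab (t u v : F) (σ : F →+* F) (ht : σ t = t) (hu : σ u = v) (hv : σ v = u)
    (hσσ : ∀ g, σ (σ g) = g) (huv : u ≠ v) (f : F) :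
    Tab t u v σ (Tab t u v σ f + f) - t * (Tab t u v σ f + f) = 0 := by
  have h1 : u - v ≠ 0 := sub_ne_zero.mpr huv
  have h2 : v - u ≠ 0 := sub_ne_zero.mpr (Ne.symm huv)
  simp only [Tab, map_sub, map_add, map_mul, map_div₀, ht, hu, hv, hσσ]
  field_simp
  ring

lemma comm_ab (t u v u' v' : F) (σ τ : F →+* F)
    (hσt : σ t = t) (hσu' : σ u' = u') (hσv' : σ v' = v')
    (hτt : τ t = t) (hτu : τ u = u) (hτv : τ v = v)
    (hcomm : ∀ g, σ (τ g) = τ (σ g)) (huv : u ≠ v) (hu'v' : u' ≠ v') (f : F) :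
    Tab t u v σ (Tab t u' v' τ f) = Tab t u' v' τ (Tab t u v σ f) := by
  have h1 : u - v ≠ 0 := sub_ne_zero.mpr huv
  have h3 : u' - v' ≠ 0 := sub_ne_zero.mpr hu'v'
  simp only [Tab, map_sub, map_mul, map_div₀, hσt, hσu', hσv',
    hτt, hτu, hτv, hcomm]
  field_simp
  ring

lemma braid_ab (t u v w : F) (σ τ : F →+* F)
    (hσt : σ t = t) (hσu : σ u = v) (hσv : σ v = u) (hσw : σ w = w)
    (hτt : τ t = t) (hτu : τ u = u) (hτv : τ v = w) (hτw : τ w = v)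
    (hσσ : ∀ g, σ (σ g) = g) (hττ : ∀ g, τ (τ g) = g)
    (hbraid : ∀ g, σ (τ (σ g)) = τ (σ (τ g)))
    (huv : u ≠ v) (hvw : v ≠ w) (huw : u ≠ w) (f : F) :
    Tab t u v σ (Tab t v w τ (Tab t u v σ f)) =
      Tab t v w τ (Tab t u v σ (Tab t v w τ f)) := by
  have h1 : u - v ≠ 0 := sub_ne_zero.mpr huv
  have h2 : v - u ≠ 0 := sub_ne_zero.mpr (Ne.symm huv)
  have h3 : v - w ≠ 0 := sub_ne_zero.mpr hvw
  have h4 : w - v ≠ 0 := sub_ne_zero.mpr (Ne.symm hvw)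
  have h5 : u - w ≠ 0 := sub_ne_zero.mpr huw
  have h6 : w - u ≠ 0 := sub_ne_zero.mpr (Ne.symm huw)
  have I1 : (t - (t * u - v) / (u - v)) * (t - (t * v - w) / (v - w)) * (t - (t * u - v) / (u - v))
        + (t * u - v) / (u - v) * ((t - (t * u - w) / (u - w)) * ((t * v - u) / (v - u)))
      = (t - (t * v - w) / (v - w)) * (t - (t * u - v) / (u - v)) * (t - (t * v - w) / (v - w))
        + (t * v - w) / (v - w) * ((t - (t * u - w) / (u - w)) * ((t * w - v) / (w - v))) := by
    field_simp; ring
  have I2 : (t - (t * u - v) / (u - v)) * (t - (t * v - w) / (v - w)) * ((t * u - v) / (u - v))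
        + (t * u - v) / (u - v) * ((t - (t * u - w) / (u - w)) * (t - (t * v - u) / (v - u)))
      = (t - (t * v - w) / (v - w)) * ((t * u - v) / (u - v)) * (t - (t * u - w) / (u - w)) := by
    field_simp; ring
  have I3 : (t - (t * u - v) / (u - v)) * ((t * v - w) / (v - w)) * (t - (t * u - w) / (u - w))
      = (t - (t * v - w) / (v - w)) * (t - (t * u - v) / (u - v)) * ((t * v - w) / (v - w))
        + (t * v - w) / (v - w) * ((t - (t * u - w) / (u - w)) * (t - (t * w - v) / (w - v))) := by
    field_simp; ring
  simp only [Tab, map_sub, map_mul, map_div₀, hσt, hσu, hσv, hσw,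
    hτt, hτu, hτv, hτw, hσσ, hττ, hbraid]
  linear_combination f * I1 + σ f * I2 + τ f * I3

end Abstract

lemma TOp_eq (n i : ℕ) (hi : 1 ≤ i) (hn : i < n) (f : Fx n) :
    TOp n i f = Tab (tF n) (xF n ⟨i - 1, by omega⟩) (xF n ⟨i, hn⟩)
      (permHom n (Equiv.swap ⟨i - 1, by omega⟩ ⟨i, hn⟩)) f := by
  have hs : swapPerm n i = Equiv.swap ⟨i - 1, by omega⟩ ⟨i, hn⟩ := dif_pos ⟨hi, hn⟩
  have hsop : sOp n i f = permHom n (Equiv.swap ⟨i - 1, by omega⟩ ⟨i, hn⟩) f := by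
    rw [show sOp n i f = permHom n (swapPerm n i) f from rfl, hs]
  rw [TOp, LOp, dif_pos (⟨hi, hn⟩ : 1 ≤ i ∧ i < n), Tab, hsop]

end AuxDL

/-- Equation (3.3) of the paper: the operators `T_i` satisfy the Hecke algebra
relations `(T_i − t)(T_i + 1) = 0`, the braid relations
`T_i T_{i+1} T_i = T_{i+1} T_i T_{i+1}`, and commutation `T_i T_j = T_j T_i` for
`|i − j| ≥ 2`. -/
theorem stmt_6 (n : ℕ) :
    (∀ i : ℕ, 1 ≤ i → i ≤ n - 1 → ∀ f : Fx n,
      TOp n i (TOp n i f + f) - tF n * (TOp n i f + f) = 0) ∧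
    (∀ i : ℕ, 1 ≤ i → i + 1 ≤ n - 1 → ∀ f : Fx n,
      TOp n i (TOp n (i + 1) (TOp n i f)) = TOp n (i + 1) (TOp n i (TOp n (i + 1) f))) ∧
    (∀ i j : ℕ, 1 ≤ i → i ≤ n - 1 → 1 ≤ j → j ≤ n - 1 → (i + 2 ≤ j ∨ j + 2 ≤ i) →
      ∀ f : Fx n, TOp n i (TOp n j f) = TOp n j (TOp n i f)) := by
  refine ⟨?_, ?_, ?_⟩
  · -- quadratic relation
    intro i hi1 hi2 f
    have hn : i < n := by omega
    have hab : (⟨i - 1, by omega⟩ : Fin n) ≠ ⟨i, hn⟩ := by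
      simp only [ne_eq, Fin.mk.injEq]; omega
    simp only [TOp_eq n i hi1 hn]
    refine quad_ab _ _ _ _ (permHom_C n _ tK) ?_ ?_ ?_ (xF_ne n hab) f
    · exact (permHom_X n _ _).trans (congrArg (xF n) (Equiv.swap_apply_left _ _))
    · exact (permHom_X n _ _).trans (congrArg (xF n) (Equiv.swap_apply_right _ _))
    · intro g
      rw [permHom_comp, Equiv.swap_mul_self, permHom_one]
  · -- braid relation
    intro i hi1 hi2 f
    have hn1 : i < n := by omega
    have hn2 : i + 1 < n := by omega
    set a : Fin n := ⟨i - 1, by omega⟩ with ha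
    set b : Fin n := ⟨i, hn1⟩ with hb
    set c : Fin n := ⟨i + 1, hn2⟩ with hc
    have hab : a ≠ b := by simp only [ha, hb, ne_eq, Fin.mk.injEq]; omega
    have hbc : b ≠ c := by simp only [hb, hc, ne_eq, Fin.mk.injEq]; omega
    have hac : a ≠ c := by simp only [ha, hc, ne_eq, Fin.mk.injEq]; omega
    have e2 : ∀ g : Fx n, TOp n (i + 1) g =
        Tab (tF n) (xF n b) (xF n c) (permHom n (Equiv.swap b c)) g := by
      intro g
      exact TOp_eq n (i + 1) (by omega) hn2 g
    simp only [TOp_eq n i hi1 hn1, e2]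
    refine braid_ab _ _ _ _ _ _
      (permHom_C n _ tK) ?_ ?_ ?_ (permHom_C n _ tK) ?_ ?_ ?_ ?_ ?_ ?_
      (xF_ne n hab) (xF_ne n hbc) (xF_ne n hac) f
    · exact (permHom_X n _ _).trans (congrArg (xF n) (Equiv.swap_apply_left _ _))
    · exact (permHom_X n _ _).trans (congrArg (xF n) (Equiv.swap_apply_right _ _))
    · exact (permHom_X n _ _).trans (congrArg (xF n) (Equiv.swap_apply_of_ne_of_ne hac.symm hbc.symm))
    · exact (permHom_X n _ _).trans (congrArg (xF n) (Equiv.swap_apply_of_ne_of_ne hab hac))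
    · exact (permHom_X n _ _).trans (congrArg (xF n) (Equiv.swap_apply_left _ _))
    · exact (permHom_X n _ _).trans (congrArg (xF n) (Equiv.swap_apply_right _ _))
    · intro g
      rw [permHom_comp, Equiv.swap_mul_self, permHom_one]
    · intro g
      rw [permHom_comp, Equiv.swap_mul_self, permHom_one]
    · intro g
      rw [permHom_comp, permHom_comp, permHom_comp, permHom_comp, swap_braid hab hbc hac]
  · -- commutation
    have key : ∀ i j : ℕ, 1 ≤ i → i < n → j < n → i + 2 ≤ j →
        ∀ f : Fx n, TOp n i (TOp n j f) = TOp n j (TOp n i f) := by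
      intro i j hi1 hin hjn hij f
      set a : Fin n := ⟨i - 1, by omega⟩ with ha
      set b : Fin n := ⟨i, hin⟩ with hb
      set c : Fin n := ⟨j - 1, by omega⟩ with hc
      set d : Fin n := ⟨j, hjn⟩ with hd
      have hab : a ≠ b := by simp only [ha, hb, ne_eq, Fin.mk.injEq]; omega
      have hcd : c ≠ d := by simp only [hc, hd, ne_eq, Fin.mk.injEq]; omega
      have hac : a ≠ c := by simp only [ha, hc, ne_eq, Fin.mk.injEq]; omega
      have had : a ≠ d := by simp only [ha, hd, ne_eq, Fin.mk.injEq]; omega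
      have hbc : b ≠ c := by simp only [hb, hc, ne_eq, Fin.mk.injEq]; omega
      have hbd : b ≠ d := by simp only [hb, hd, ne_eq, Fin.mk.injEq]; omega
      simp only [TOp_eq n i hi1 hin, TOp_eq n j (by omega) hjn]
      refine comm_ab (tF n) (xF n a) (xF n b) (xF n c) (xF n d)
        (permHom n (Equiv.swap a b)) (permHom n (Equiv.swap c d))
        (permHom_C n _ tK) ?_ ?_ (permHom_C n _ tK) ?_ ?_ ?_
        (xF_ne n hab) (xF_ne n hcd) f
      · exact (permHom_X n _ _).trans (congrArg (xF n) (Equiv.swap_apply_of_ne_of_ne hac.symm hbc.symm))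
      · exact (permHom_X n _ _).trans (congrArg (xF n) (Equiv.swap_apply_of_ne_of_ne had.symm hbd.symm))
      · exact (permHom_X n _ _).trans (congrArg (xF n) (Equiv.swap_apply_of_ne_of_ne hac had))
      · exact (permHom_X n _ _).trans (congrArg (xF n) (Equiv.swap_apply_of_ne_of_ne hbc hbd))
      · intro g
        rw [permHom_comp, permHom_comp, swap_disjoint_comm hac had hbc hbd]
    intro i j hi1 hi2 hj1 hj2 hij f
    rcases hij with h | h
    · exact key i j hi1 (by omega) (by omega) h f
    · exact (key j i hj1 (by omega) (by omega) h f).symm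
end

section
/- Let λ be a partition with n parts and let η and τ be two distinct compositions, each obtained by permuting the parts of λ. For a composition ν of length n and 1 ≤ i ≤ n, define c_i(ν) = #{j > i : ν_j ≥ ν_i} + #{j < i : ν_j > ν_i}. Then the tuples (c₁(η),…,cₙ(η)) and (c₁(τ),…,cₙ(τ)) are distinct. Consequently, the eigenvalue tuples (t^{−c₁(ν)},…,t^{−cₙ(ν)}) of the Cherednik–Dunkl operators at q = 1 remain distinct as ν ranges over the rearrangements of a fixed partition λ. -/
/-!
Write `v = ν i`. Counting `j ≠ i` by their position relative to `i` shows
`#{j | v < ν j} ≤ c_i(ν) < #{j | v ≤ ν j}`, and both bounds only depend on the multiset of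
parts. For the decreasing arrangement `λ` of these parts, the positions `k` in that window are
exactly those with `λ k = v`; hence `λ (c_i(ν)) = ν i`, so the exponents `c_i(ν)` determine `ν`.
-/

/-- The set `S_λ` of compositions obtained by permuting the parts of `lam`. -/
noncomputable def SLam (n : ℕ) (lam : Fin n → ℕ) : Finset (Fin n → ℕ) :=
  Finset.image (fun σ : Equiv.Perm (Fin n) => lam ∘ σ) Finset.univ

/-- `c_i(ν) = #{j > i : ν_j ≥ ν_i} + #{j < i : ν_j > ν_i}`. -/
def cExp (n : ℕ) (ν : Fin n → ℕ) (i : Fin n) : ℕ :=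
  (Finset.univ.filter (fun j => i < j ∧ ν i ≤ ν j)).card +
    (Finset.univ.filter (fun j => j < i ∧ ν i < ν j)).card

open Finset

section Antitone

variable {α : Type*} [LinearOrder α] {n : ℕ} {f : Fin n → α}

lemma Antitone.lt_card_filter_lt (hf : Antitone f) {v : α} {c : Fin n} (h : v < f c) :
    (c : ℕ) < #{k | v < f k} := by
  have hsub : Iic c ⊆ ({k | v < f k} : Finset (Fin n)) := fun k hk =>
    mem_filter.2 ⟨mem_univ k, h.trans_le (hf (mem_Iic.1 hk))⟩
  simpa using card_le_card hsub

lemma Antitone.card_filter_le_le (hf : Antitone f) {v : α} {c : Fin n} (h : f c < v) :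
    #{k | v ≤ f k} ≤ (c : ℕ) := by
  have hsub : ({k | v ≤ f k} : Finset (Fin n)) ⊆ Iio c := fun k hk => by
    by_contra hkc
    exact (hf (not_lt.1 (mem_Iio.not.1 hkc))).not_gt (h.trans_le (mem_filter.1 hk).2)
  simpa using card_le_card hsub

lemma Antitone.apply_eq_of_card_filter_le_of_lt (hf : Antitone f) {v : α} {c : Fin n}
    (hlow : #{k | v < f k} ≤ (c : ℕ)) (hup : (c : ℕ) < #{k | v ≤ f k}) : f c = v := by
  rcases lt_trichotomy (f c) v with h | h | h
  · exact absurd (hf.card_filter_le_le h) hup.not_ge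
  · exact h
  · exact absurd (hf.lt_card_filter_lt h) hlow.not_gt

end Antitone

lemma card_filter_comp_perm {α : Type*} [Fintype α] (σ : Equiv.Perm α) (p : α → Prop)
    [DecidablePred p] : #{j | p (σ j)} = #{k | p k} :=
  card_equiv σ (by simp)

section cExp

variable {n : ℕ} (ν : Fin n → ℕ) (i : Fin n)

lemma card_filter_lt_le_cExp : #{j | ν i < ν j} ≤ cExp n ν i := by
  have hsub : ({j | ν i < ν j} : Finset (Fin n)) ⊆
      univ.filter (fun j => i < j ∧ ν i ≤ ν j) ∪ univ.filter (fun j => j < i ∧ ν i < ν j) := by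
    intro j hj
    have hlt : ν i < ν j := (mem_filter.1 hj).2
    rcases lt_trichotomy i j with hij | rfl | hji
    · simp [hij, hlt.le]
    · exact absurd hlt (lt_irrefl _)
    · simp [hji, hlt]
  exact (card_le_card hsub).trans (card_union_le _ _)

lemma cExp_lt_card_filter_le : cExp n ν i < #{j | ν i ≤ ν j} := by
  have hdisj : Disjoint (univ.filter fun j => i < j ∧ ν i ≤ ν j)
      (univ.filter fun j => j < i ∧ ν i < ν j) :=
    disjoint_filter.2 fun j _ h₁ h₂ => lt_asymm h₁.1 h₂.1
  have hsub : univ.filter (fun j => i < j ∧ ν i ≤ ν j) ∪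
      univ.filter (fun j => j < i ∧ ν i < ν j) ⊂ univ.filter (fun j => ν i ≤ ν j) := by
    refine (ssubset_iff_of_subset fun j hj => ?_).2 ⟨i, by simp, by simp⟩
    simp only [mem_union, mem_filter, mem_univ, true_and] at hj ⊢
    rcases hj with h | h
    exacts [h.2, h.2.le]
  rw [cExp, ← card_union_of_disjoint hdisj]
  exact card_lt_card hsub

lemma cExp_lt : cExp n ν i < n :=
  (cExp_lt_card_filter_le ν i).trans_le (card_le_univ _ |>.trans_eq (Fintype.card_fin n))

end cExp

lemma apply_cExp_of_mem_SLam {n : ℕ} {lam ν : Fin n → ℕ} (hlam : Antitone lam)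
    (hν : ν ∈ SLam n lam) (i : Fin n) : lam ⟨cExp n ν i, cExp_lt ν i⟩ = ν i := by
  obtain ⟨σ, -, rfl⟩ := mem_image.1 hν
  apply hlam.apply_eq_of_card_filter_le_of_lt
  · rw [← card_filter_comp_perm σ]
    exact card_filter_lt_le_cExp _ i
  · rw [← card_filter_comp_perm σ]
    exact cExp_lt_card_filter_le _ i

lemma cExp_injOn_SLam {n : ℕ} {lam : Fin n → ℕ} (hlam : Antitone lam) :
    Set.InjOn (cExp n) (SLam n lam) := fun η hη τ hτ h => funext fun i => by
  rw [← apply_cExp_of_mem_SLam hlam hη, ← apply_cExp_of_mem_SLam hlam hτ]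
  simp_rw [h]

lemma RatFunc.intDegree_X_zpow {K : Type*} [Field K] (k : ℤ) :
    intDegree ((X : RatFunc K) ^ k) = k := by
  obtain ⟨m, rfl | rfl⟩ := k.eq_nat_or_neg
  · rw [zpow_natCast, ← algebraMap_X, ← map_pow, intDegree_polynomial, Polynomial.natDegree_X_pow]
  · rw [zpow_neg, intDegree_inv, zpow_natCast, ← algebraMap_X, ← map_pow, intDegree_polynomial,
      Polynomial.natDegree_X_pow]

lemma RatFunc.X_zpow_injective (K : Type*) [Field K] :
    Function.Injective fun k : ℤ => (X : RatFunc K) ^ k := fun a b h => by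
  simpa only [intDegree_X_zpow] using congrArg intDegree h

/-- Remark 3.6 of the paper: two distinct rearrangements `η ≠ τ` of the same
partition `λ` have distinct exponent tuples `(c₁(ν),…,cₙ(ν))`; consequently the
eigenvalue tuples `(t^{−c₁(ν)},…,t^{−cₙ(ν)})` of the Cherednik–Dunkl operators at
`q = 1` (as rational functions of `t`) remain distinct. -/
theorem stmt_8 (n : ℕ) (lam : Fin n → ℕ)
    (hlam : ∀ i j : Fin n, i ≤ j → lam j ≤ lam i)
    (η τ : Fin n → ℕ) (hη : η ∈ SLam n lam) (hτ : τ ∈ SLam n lam) (hne : η ≠ τ) :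
    (fun i => cExp n η i) ≠ (fun i => cExp n τ i) ∧
    (fun i => (RatFunc.X : RatFunc ℚ) ^ (-(cExp n η i : ℤ)))
      ≠ (fun i => (RatFunc.X : RatFunc ℚ) ^ (-(cExp n τ i : ℤ))) := by
  have hc : cExp n η ≠ cExp n τ := fun h => hne (cExp_injOn_SLam (fun i j => hlam i j) hη hτ h)
  refine ⟨hc, fun h => hc (funext fun i => ?_)⟩
  exact_mod_cast neg_injective (RatFunc.X_zpow_injective ℚ (congrFun h i))
end
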